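/- arXiv:0905.0813 — 2 statements merged into one kernel-verified Lean document; each statement's English description precedes it below -/
import Mathlib

section
/- With P_k defined by P_0 = 1, P_k = -Σ_{j=1}^{k}(j+1) c_j P_{k-j}, and the Kirillov operators L_k = ∂_k + Σ_{m≥1}(m+1) c_m ∂_{k+m}, one has L_k P_n = (n - 2k - 1) P_{n-k} for n ≥ k ≥ 1, and L_k P_n = 0 for n < k. -/
/-- The polynomials `P_k ∈ ℤ[c_1, c_2, ...]` defined by `P_0 = 1` and
`P_k = -Σ_{j=1}^{k} (j+1) c_j P_{k-j}`. -/
noncomputable def Ppoly : ℕ → MvPolynomial ℕ ℤ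
  | 0 => 1
  | (k + 1) => -∑ j ∈ Finset.range (k + 1),
      ((j : ℤ) + 2) • (MvPolynomial.X (j + 1) * Ppoly (k - j))
  termination_by k => k
  decreasing_by omega

/-- The Kirillov operator `L_k = ∂_k + Σ_{m≥1} (m+1) c_m ∂_{k+m}` acting on
`ℤ[c_1, c_2, ...]`. -/
noncomputable def kirillovL (k : ℕ) (p : MvPolynomial ℕ ℤ) : MvPolynomial ℕ ℤ :=
  MvPolynomial.pderiv k p +
    ∑ᶠ m : ℕ, if 1 ≤ m then ((m : ℤ) + 1) • (MvPolynomial.X m * MvPolynomial.pderiv (k + m) p)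
      else 0

/-!
Put `C_j = (j+1) c_j` with `c_0 = 1`, so that the recursion reads `Σ_{j ≤ n} C_j P_{n-j} = δ_{n,0}`.
The operator `L_k` is a derivation (the infinite sum is finite on each polynomial) with
`L_k C_{k+i} = (k+i+1) C_i` and `L_k C_j = 0` for `j < k`. Applying `L_k` to the recursion gives
`Σ_j C_j L_k P_{n-j} = -Σ_j (L_k C_j) P_{n-j}`. The claimed values satisfy the same identity,
because after reindexing the coefficient of `C_i P_{m-i}` is `m`, independent of `i`, and
`m Σ_i C_i P_{m-i} = m δ_{m,0} = 0`. Since `C_0 = 1`, these identities determine `L_k P_n`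
recursively.
-/

open MvPolynomial Finset Function

namespace Derivation

variable {ι R A M : Type*} [CommSemiring R] [CommSemiring A] [AddCommMonoid M] [Algebra R A]
  [Module A M] [Module R M]

noncomputable def finsum (D : ι → Derivation R A M) (hD : ∀ a, HasFiniteSupport fun i ↦ D i a) :
    Derivation R A M where
  toFun a := ∑ᶠ i, D i a
  map_add' a b := by simp only [map_add]; exact finsum_add_distrib (hD a) (hD b)
  map_smul' r a := by simp only [map_smul]; exact (smul_finsum' r (hD a)).symm
  map_one_eq_zero' := by simp
  leibniz' a b := by
    simp only [leibniz, LinearMap.coe_mk, AddHom.coe_mk]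
    rw [finsum_add_distrib ((hD b).fun_smul_right _) ((hD a).fun_smul_right _),
      smul_finsum' _ (hD b), smul_finsum' _ (hD a)]

theorem finsum_apply (D : ι → Derivation R A M) (hD : ∀ a, HasFiniteSupport fun i ↦ D i a)
    (a : A) : Derivation.finsum D hD a = ∑ᶠ i, D i a := rfl

end Derivation

noncomputable def kirillovTail (k m : ℕ) : Derivation ℤ (MvPolynomial ℕ ℤ) (MvPolynomial ℕ ℤ) :=
  if 1 ≤ m then ((m : ℤ) + 1) • (X m : MvPolynomial ℕ ℤ) • pderiv (k + m) else 0

lemma kirillovTail_apply (k m : ℕ) (p : MvPolynomial ℕ ℤ) :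
    kirillovTail k m p = if 1 ≤ m then ((m : ℤ) + 1) • (X m * pderiv (k + m) p) else 0 := by
  unfold kirillovTail; split_ifs <;> simp

lemma hasFiniteSupport_kirillovTail_apply (k : ℕ) (p : MvPolynomial ℕ ℤ) :
    HasFiniteSupport fun m ↦ kirillovTail k m p := by
  refine ((p.vars.finite_toSet).preimage (add_right_injective k).injOn).subset fun m hm ↦ ?_
  by_contra hvars
  simp [kirillovTail_apply, pderiv_eq_zero_of_notMem_vars hvars] at hm

noncomputable def kirillovDerivation (k : ℕ) : Derivation ℤ (MvPolynomial ℕ ℤ) (MvPolynomial ℕ ℤ) :=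
  pderiv k + Derivation.finsum (kirillovTail k) (hasFiniteSupport_kirillovTail_apply k)

lemma kirillovDerivation_apply (k : ℕ) (p : MvPolynomial ℕ ℤ) :
    kirillovDerivation k p = kirillovL k p := by
  simp [kirillovDerivation, kirillovL, Derivation.finsum_apply, kirillovTail_apply]

noncomputable def Cpoly (j : ℕ) : MvPolynomial ℕ ℤ := ((j : ℤ) + 1) • if j = 0 then 1 else X j

lemma Cpoly_zero : Cpoly 0 = 1 := by simp [Cpoly]

lemma Cpoly_succ (j : ℕ) : Cpoly (j + 1) = ((j : ℤ) + 2) • X (j + 1) := by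
  rw [Cpoly, if_neg j.succ_ne_zero, Nat.cast_succ, add_assoc, one_add_one_eq_two]

lemma kirillovDerivation_X_of_lt {k j : ℕ} (hj : j < k) : kirillovDerivation k (X j) = 0 := by
  rw [kirillovDerivation, Derivation.add_apply, Derivation.finsum_apply, pderiv_X_of_ne hj.ne,
    zero_add]
  refine finsum_eq_zero_of_forall_eq_zero fun m ↦ ?_
  simp [kirillovTail_apply, pderiv_X_of_ne (show j ≠ k + m by omega)]

lemma kirillovDerivation_X_add (k i : ℕ) : kirillovDerivation k (X (k + i)) = Cpoly i := by
  rw [kirillovDerivation, Derivation.add_apply, Derivation.finsum_apply]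
  rcases i with _ | i
  · rw [add_zero, pderiv_X_self, Cpoly_zero, add_eq_left]
    refine finsum_eq_zero_of_forall_eq_zero fun m ↦ ?_
    rcases m with _ | m
    · simp [kirillovTail_apply]
    · simp [kirillovTail_apply, pderiv_X_of_ne (show k ≠ k + (m + 1) by omega)]
  · rw [pderiv_X_of_ne (by omega), zero_add, finsum_eq_single _ (i + 1)]
    · rw [kirillovTail_apply, if_pos (by omega), pderiv_X_self, mul_one, Cpoly,
        if_neg i.succ_ne_zero]
    · intro m hm
      simp [kirillovTail_apply, pderiv_X_of_ne (show k + (i + 1) ≠ k + m by omega)]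

lemma kirillovDerivation_Cpoly_of_lt {k j : ℕ} (hj : j < k) :
    kirillovDerivation k (Cpoly j) = 0 := by
  rcases j with _ | j
  · rw [Cpoly_zero, Derivation.map_one_eq_zero]
  · rw [Cpoly_succ, map_zsmul, kirillovDerivation_X_of_lt hj, smul_zero]

lemma kirillovDerivation_Cpoly_add {k : ℕ} (hk : 1 ≤ k) (i : ℕ) :
    kirillovDerivation k (Cpoly (k + i)) = (((k + i : ℕ) : ℤ) + 1) • Cpoly i := by
  rw [Cpoly, if_neg (by omega), map_zsmul, kirillovDerivation_X_add]

theorem eq_of_sum_range_mul_sub_eq {R : Type*} [Semiring R] [IsLeftCancelAdd R] {a f g : ℕ → R}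
    (ha : a 0 = 1)
    (h : ∀ n, ∑ j ∈ range (n + 1), a j * f (n - j) = ∑ j ∈ range (n + 1), a j * g (n - j)) :
    f = g := by
  funext n
  induction n using Nat.strong_induction_on with
  | _ n ih =>
    have hn := h n
    rw [sum_range_succ', sum_range_succ', ha, one_mul, one_mul, Nat.sub_zero,
      sum_congr rfl fun j hj ↦ by rw [ih (n - (j + 1)) (by simp at hj; omega)]] at hn
    exact add_left_cancel hn

lemma sum_range_Cpoly_mul_Ppoly (n : ℕ) :
    ∑ j ∈ range (n + 1), Cpoly j * Ppoly (n - j) = if n = 0 then 1 else 0 := by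
  rcases n with _ | n
  · simp [Cpoly_zero, Ppoly]
  · rw [sum_range_succ', Cpoly_zero, one_mul, Nat.sub_zero, Ppoly]
    simp only [Cpoly_succ, smul_mul_assoc, Nat.add_sub_add_right, add_neg_cancel,
      Nat.add_one_ne_zero, if_false]

noncomputable def LPpoly (k n : ℕ) : MvPolynomial ℕ ℤ :=
  if k ≤ n then ((n : ℤ) - 2 * k - 1) • Ppoly (n - k) else 0

lemma sum_range_Cpoly_mul_LPpoly {k : ℕ} (hk : 1 ≤ k) (n : ℕ) :
    ∑ j ∈ range (n + 1), Cpoly j * LPpoly k (n - j) =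
      -∑ j ∈ range (n + 1), kirillovDerivation k (Cpoly j) * Ppoly (n - j) := by
  rcases lt_or_ge n k with hn | hn
  · rw [sum_eq_zero, sum_eq_zero, neg_zero]
    · intro j hj
      rw [kirillovDerivation_Cpoly_of_lt (by simp at hj; omega), zero_mul]
    · intro j _
      rw [LPpoly, if_neg (by omega), mul_zero]
  obtain ⟨m, rfl⟩ := Nat.exists_eq_add_of_le hn
  have hL : ∑ j ∈ range (k + m + 1), Cpoly j * LPpoly k (k + m - j) =
      ∑ j ∈ range (m + 1), Cpoly j * ((((k + m - j : ℕ) : ℤ) - 2 * k - 1) • Ppoly (m - j)) := by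
    rw [show k + m + 1 = (m + 1) + k by omega, sum_range_add, add_eq_left.mpr]
    · refine sum_congr rfl fun j hj ↦ ?_
      rw [LPpoly, if_pos (by simp at hj; omega), show k + m - j - k = m - j by omega]
    · exact sum_eq_zero fun j _ ↦ by rw [LPpoly, if_neg (by omega), mul_zero]
  have hR : ∑ j ∈ range (k + m + 1), kirillovDerivation k (Cpoly j) * Ppoly (k + m - j) =
      ∑ i ∈ range (m + 1), ((((k + i : ℕ) : ℤ) + 1) • Cpoly i) * Ppoly (m - i) := by
    rw [add_assoc, sum_range_add, sum_eq_zero fun j hj ↦ by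
      rw [kirillovDerivation_Cpoly_of_lt (by simpa using hj), zero_mul], zero_add]
    exact sum_congr rfl fun i _ ↦ by
      rw [kirillovDerivation_Cpoly_add hk, Nat.add_sub_add_left]
  rw [hL, hR, eq_neg_iff_add_eq_zero, ← sum_add_distrib]
  have hterm : ∀ i ∈ range (m + 1),
      Cpoly i * ((((k + m - i : ℕ) : ℤ) - 2 * k - 1) • Ppoly (m - i)) +
        ((((k + i : ℕ) : ℤ) + 1) • Cpoly i) * Ppoly (m - i) =
      (m : ℤ) • (Cpoly i * Ppoly (m - i)) := by
    intro i hi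
    rw [Nat.cast_sub (by simp at hi; omega)]
    simp only [zsmul_eq_mul]
    push_cast
    ring
  rw [sum_congr rfl hterm, ← smul_sum, sum_range_Cpoly_mul_Ppoly]
  rcases m with _ | m <;> simp

lemma kirillovDerivation_Ppoly {k : ℕ} (hk : 1 ≤ k) (n : ℕ) :
    kirillovDerivation k (Ppoly n) = LPpoly k n := by
  suffices (fun n ↦ kirillovDerivation k (Ppoly n)) = LPpoly k from congrFun this n
  refine eq_of_sum_range_mul_sub_eq Cpoly_zero fun n ↦ ?_
  have hconst : kirillovDerivation k (if n = 0 then (1 : MvPolynomial ℕ ℤ) else 0) = 0 := by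
    split_ifs <;> simp
  rw [sum_range_Cpoly_mul_LPpoly hk, eq_neg_iff_add_eq_zero, ← sum_add_distrib, ← hconst,
    ← sum_range_Cpoly_mul_Ppoly, map_sum]
  refine sum_congr rfl fun j _ ↦ ?_
  rw [Derivation.leibniz, smul_eq_mul, smul_eq_mul, mul_comm (Ppoly _)]

/-- `L_k P_n = (n - 2k - 1) P_{n-k}` for `n ≥ k ≥ 1`, and `L_k P_n = 0` for `n < k`. -/
theorem kirillov_acts_on_Ppoly :
    (∀ n k : ℕ, 1 ≤ k → k ≤ n →
      kirillovL k (Ppoly n) = ((n : ℤ) - 2 * k - 1) • Ppoly (n - k)) ∧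
    (∀ n k : ℕ, 1 ≤ k → n < k → kirillovL k (Ppoly n) = 0) := by
  refine ⟨fun n k hk hkn ↦ ?_, fun n k hk hnk ↦ ?_⟩ <;>
    rw [← kirillovDerivation_apply, kirillovDerivation_Ppoly hk, LPpoly]
  exacts [if_pos hkn, if_neg (by omega)]
end

section
/- Let u_1(t), ..., u_n(t) be complex-valued differentiable functions satisfying the system u̇_k = Σ_{j=1}^{n-k} (j - k) ū_j u_{j+k} for k = 1, ..., n. Then the quantity |u(t)|² = Σ_{k=1}^n |u_k(t)|² is constant in t. -/
/-!
Pairing the equation for `u̇_k` with `ū_k` and summing over `k` gives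
`Σ_{j+k ≤ n} (j - k) ū_j u_{j+k} ū_k`, whose summand is antisymmetric under `j ↔ k`.
Hence `Σ_k u̇_k ū_k = 0`, and `d/dt Σ_k |u_k|² = 2 Re Σ_k u̇_k ū_k` vanishes.
-/

open Finset

theorem sum_Icc_sum_Icc_sub_mul_eq_zero {R : Type*} [CommRing R] (n : ℕ) (g : ℕ → ℕ → R)
    (hg : ∀ k j, g k j = g j k) :
    ∑ k ∈ Icc 1 n, ∑ j ∈ Icc 1 (n - k), ((j : R) - k) * g k j = 0 := by
  rw [sum_sigma']
  refine sum_involution (fun p _ => ⟨p.2, p.1⟩) ?_ ?_ ?_ fun _ _ => rfl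
  · rintro ⟨k, j⟩ -
    rw [hg j k]
    ring
  · rintro ⟨k, j⟩ - hne hswap
    obtain rfl : j = k := congrArg Sigma.fst hswap
    simp at hne
  · rintro ⟨k, j⟩ hkj
    simp only [mem_sigma, mem_Icc] at hkj ⊢
    omega

def quadraticField {R : Type*} [CommRing R] [StarRing R] (n : ℕ) (v : ℕ → R) (k : ℕ) : R :=
  ∑ j ∈ Icc 1 (n - k), ((j : R) - k) * starRingEnd R (v j) * v (j + k)

theorem sum_quadraticField_mul_star_eq_zero {R : Type*} [CommRing R] [StarRing R]
    (n : ℕ) (v : ℕ → R) :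
    ∑ k ∈ Icc 1 n, quadraticField n v k * starRingEnd R (v k) = 0 := by
  simp_rw [quadraticField, sum_mul, mul_assoc]
  refine sum_Icc_sum_Icc_sub_mul_eq_zero n
    (fun k j => starRingEnd R (v j) * (v (j + k) * starRingEnd R (v k))) fun k j => ?_
  rw [add_comm k j]
  ring

theorem hasDerivAt_sum_normSq {ι : Type*} (s : Finset ι) {f : ι → ℝ → ℂ} {f' : ι → ℂ} {t : ℝ}
    (hf : ∀ i ∈ s, HasDerivAt (f i) (f' i) t) :
    HasDerivAt (fun t => ∑ i ∈ s, Complex.normSq (f i t))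
      (2 * (∑ i ∈ s, f' i * starRingEnd ℂ (f i t)).re) t := by
  simp_rw [Complex.normSq_eq_norm_sq, Complex.re_sum, mul_sum, ← Complex.inner]
  exact HasDerivAt.fun_sum fun i hi => (hf i hi).norm_sq

/-- If `u_1(t), ..., u_n(t)` are differentiable complex-valued functions
satisfying `u̇_k = Σ_{j=1}^{n-k} (j - k) ū_j u_{j+k}` for `k = 1, ..., n`, then
`|u(t)|² = Σ_{k=1}^n |u_k(t)|²` is constant in `t`. -/
theorem velocity_norm_constant (n : ℕ) (u : ℕ → ℝ → ℂ)
    (hdiff : ∀ k, Differentiable ℝ (u k))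
    (hode : ∀ t : ℝ, ∀ k ∈ Finset.Icc 1 n, deriv (u k) t =
      ∑ j ∈ Finset.Icc 1 (n - k), ((j : ℂ) - (k : ℂ)) * (starRingEnd ℂ) (u j t) * u (j + k) t) :
    ∀ t s : ℝ,
      ∑ k ∈ Finset.Icc 1 n, Complex.normSq (u k t) =
        ∑ k ∈ Finset.Icc 1 n, Complex.normSq (u k s) := by
  have hconst : ∀ t, HasDerivAt (fun t => ∑ k ∈ Icc 1 n, Complex.normSq (u k t)) 0 t := by
    intro t
    have hsum : ∑ k ∈ Icc 1 n, deriv (u k) t * starRingEnd ℂ (u k t) = 0 := by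
      rw [← sum_quadraticField_mul_star_eq_zero n (u · t)]
      exact sum_congr rfl fun k hk => by rw [hode t k hk, quadraticField]
    simpa [hsum] using hasDerivAt_sum_normSq (Icc 1 n) fun k _ => (hdiff k t).hasDerivAt
  exact is_const_of_deriv_eq_zero (fun t => (hconst t).differentiableAt) fun t => (hconst t).deriv
end
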